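/- arXiv:2207.14119 — 4 statements merged into one kernel-verified Lean document; each statement's English description precedes it below -/
import Mathlib

section
/- For finite sets C, C' of elements of α and a function G : α → β, there exists an injective map m from C to C' satisfying G (m t) = G t for every t ∈ C if and only if the multiset obtained by mapping G over C is contained (as a multiset, i.e., ≤ in the submultiset order) in the multiset obtained by mapping G over C'. -/
/-- A finite set of axioms `C` is contained in `C'` w.r.t. the ground generalisation `G`
iff there is an injective map `m : C → C'` with `G (m t) = G t` for every `t ∈ C`;
equivalently, the multiset image of `C` under `G` is a submultiset of that of `C'`. -/
theorem frame_containment_iff_multiset_le {α β : Type*} (G : α → β) (C C' : Finset α) :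
    (∃ m : {x // x ∈ C} → {x // x ∈ C'},
      Function.Injective m ∧ ∀ t : {x // x ∈ C}, G (m t).1 = G t.1) ↔
    Multiset.map G C.val ≤ Multiset.map G C'.val := by
  classical
  constructor
  · rintro ⟨m, hinj, hG⟩
    rw [Multiset.le_iff_count]
    intro b
    rw [Multiset.count_map, Multiset.count_map]
    have h1 : C.val.filter (fun a => b = G a) = (C.filter (fun a => b = G a)).val :=
      (Finset.filter_val _ _).symm
    have h2 : C'.val.filter (fun a => b = G a) = (C'.filter (fun a => b = G a)).val :=
      (Finset.filter_val _ _).symm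
    rw [h1, h2]
    show (C.filter (fun a => b = G a)).card ≤ (C'.filter (fun a => b = G a)).card
    apply Finset.card_le_card_of_injOn (fun a => if h : a ∈ C then (m ⟨a, h⟩).1 else a)
    · intro a ha
      rw [Finset.mem_coe, Finset.mem_filter] at ha ⊢
      rcases ha with ⟨haC, hb⟩
      simp only [dif_pos haC]
      exact ⟨(m ⟨a, haC⟩).2, hb.trans (hG ⟨a, haC⟩).symm⟩
    · intro a ha a' ha' h
      rw [Finset.mem_coe, Finset.mem_filter] at ha ha'
      simp only [dif_pos ha.1, dif_pos ha'.1] at h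
      exact Subtype.mk_eq_mk.mp (hinj (Subtype.ext h))
  · intro hle
    have hcard : ∀ b : β,
        (C.filter (fun a => b = G a)).card ≤ (C'.filter (fun a => b = G a)).card := by
      intro b
      have h := Multiset.le_iff_count.mp hle b
      rw [Multiset.count_map, Multiset.count_map] at h
      have h1 : C.val.filter (fun a => b = G a) = (C.filter (fun a => b = G a)).val :=
        (Finset.filter_val _ _).symm
      have h2 : C'.val.filter (fun a => b = G a) = (C'.filter (fun a => b = G a)).val :=
        (Finset.filter_val _ _).symm
      rw [h1, h2] at h
      exact h
    have hemb : ∀ b : β, Nonempty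
        ({a // a ∈ C.filter (fun a => b = G a)} ↪ {a // a ∈ C'.filter (fun a => b = G a)}) := by
      intro b
      apply Function.Embedding.nonempty_of_card_le
      simpa [Fintype.card_coe] using hcard b
    let e : ∀ b : β, {a // a ∈ C.filter (fun a => b = G a)} ↪
        {a // a ∈ C'.filter (fun a => b = G a)} := fun b => (hemb b).some
    have key : ∀ (b b' : β), b = b' → ∀ (x : α) (hx : x ∈ C.filter (fun a => b = G a))
        (y : α) (hy : y ∈ C.filter (fun a => b' = G a)),
        ((e b) ⟨x, hx⟩).1 = ((e b') ⟨y, hy⟩).1 → x = y := by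
      rintro b b' rfl x hx y hy h
      exact Subtype.mk_eq_mk.mp ((e b).injective (Subtype.ext h))
    refine ⟨fun x => ⟨(e (G x.1) ⟨x.1, Finset.mem_filter.mpr ⟨x.2, rfl⟩⟩).1,
      (Finset.mem_filter.mp (e (G x.1) ⟨x.1, Finset.mem_filter.mpr ⟨x.2, rfl⟩⟩).2).1⟩, ?_, ?_⟩
    · intro x y hxy
      have hv : (e (G x.1) ⟨x.1, Finset.mem_filter.mpr ⟨x.2, rfl⟩⟩).1 =
          (e (G y.1) ⟨y.1, Finset.mem_filter.mpr ⟨y.2, rfl⟩⟩).1 :=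
        congrArg Subtype.val hxy
      have hbx := (Finset.mem_filter.mp (e (G x.1) ⟨x.1, Finset.mem_filter.mpr ⟨x.2, rfl⟩⟩).2).2
      have hby := (Finset.mem_filter.mp (e (G y.1) ⟨y.1, Finset.mem_filter.mpr ⟨y.2, rfl⟩⟩).2).2
      have hb : G x.1 = G y.1 := hbx.trans (by rw [hv, ← hby])
      exact Subtype.ext (key _ _ hb _ _ _ _ hv)
    · intro t
      exact (Finset.mem_filter.mp (e (G t.1) ⟨t.1, Finset.mem_filter.mpr ⟨t.2, rfl⟩⟩).2).2.symm
end

section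
/- If C ≲_G C' and C' ≲_G C for finite sets C, C' of α, then the multiset images of C and C' under G are equal, i.e., Multiset.map G of the underlying multiset of C equals Multiset.map G of the underlying multiset of C'. -/
/-- Class frame containment: `C ≲_G C'` iff there exists an injective map `m : C → C'`
with `G (m t) = G t` for every `t ∈ C`. -/
def FrameContain {α β : Type*} (G : α → β) (C C' : Finset α) : Prop :=
  ∃ m : {x // x ∈ C} → {x // x ∈ C'},
    Function.Injective m ∧ ∀ t : {x // x ∈ C}, G (m t).1 = G t.1

theorem FrameContain.map_le {α β : Type*} {G : α → β} {C C' : Finset α}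
    (h : FrameContain G C C') : C.val.map G ≤ C'.val.map G := by
  obtain ⟨m, hm, hG⟩ := h
  calc C.val.map G = (C.attach.map ⟨m, hm⟩).val.map (fun t => G t.1) := by
        rw [← C.val.attach_map_val', Finset.map_val, Multiset.map_map]
        exact Multiset.map_congr rfl fun t _ => (hG t).symm
    _ ≤ C'.attach.val.map (fun t => G t.1) :=
        Multiset.map_le_map (Finset.val_le_iff.2 fun t _ => C'.mem_attach t)
    _ = C'.val.map G := C'.val.attach_map_val' G

/-- Mutual class frame containment implies equal multiset images under `G`. -/
theorem frameContain_antisymm {α β : Type*} (G : α → β) (C C' : Finset α)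
    (h₁ : FrameContain G C C') (h₂ : FrameContain G C' C) :
    Multiset.map G C.val = Multiset.map G C'.val :=
  le_antisymm h₁.map_le h₂.map_le
end

section
/- Class frame containment descends to a well-defined partial order on the quotient of the type of finite sets of α by the equivalence relation identifying C and C' whenever their multiset images under G are equal: the relation [C] ≤ [C'] iff C ≲_G C' is well defined, reflexive, transitive, and antisymmetric. (Partial Order on Class Frames.) -/
/-- Equivalence of class frames: equal multiset images under `G`.
Its equivalence classes are the syntactic regularities for class frames. -/
def frameSetoid {α β : Type*} (G : α → β) : Setoid (Finset α) :=
  ⟨fun C C' => Multiset.map G C.val = Multiset.map G C'.val,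
   ⟨fun _ => rfl, Eq.symm, Eq.trans⟩⟩

private theorem contain_of_le {α β : Type*} (G : α → β) (C : Finset α) :
    ∀ C' : Finset α, Multiset.map G C.val ≤ Multiset.map G C'.val → FrameContain G C C' := by
  classical
  induction C using Finset.induction_on with
  | empty =>
      intro C' _
      exact ⟨fun t => (Finset.notMem_empty _ t.2).elim,
        fun t => (Finset.notMem_empty _ t.2).elim,
        fun t => (Finset.notMem_empty _ t.2).elim⟩
  | @insert a s ha ih =>
      intro C' hle
      rw [Finset.insert_val_of_notMem ha, Multiset.map_cons] at hle
      have hGa : G a ∈ Multiset.map G C'.val :=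
        Multiset.mem_of_le hle (Multiset.mem_cons_self _ _)
      obtain ⟨a', ha'C, ha'G⟩ := Multiset.mem_map.mp hGa
      have ha'C' : a' ∈ C' := ha'C
      have h2 : Multiset.map G C'.val = G a ::ₘ Multiset.map G (C'.erase a').val := by
        rw [Finset.erase_val, ← ha'G, ← Multiset.map_cons, Multiset.cons_erase ha'C]
      rw [h2] at hle
      have hle2 : Multiset.map G s.val ≤ Multiset.map G (C'.erase a').val :=
        (Multiset.cons_le_cons_iff _).mp hle
      obtain ⟨m, hinj, hG⟩ := ih (C'.erase a') hle2
      refine ⟨fun t => if h : t.1 ∈ s then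
          ⟨(m ⟨t.1, h⟩).1, Finset.mem_of_mem_erase (m ⟨t.1, h⟩).2⟩
        else ⟨a', ha'C'⟩, ?_, ?_⟩
      · intro t u htu
        have ht := t.2; have hu := u.2
        rw [Finset.mem_insert] at ht hu
        by_cases h1 : t.1 ∈ s <;> by_cases h2 : u.1 ∈ s <;> simp [h1, h2] at htu
        · have h3 : (⟨t.1, h1⟩ : {x // x ∈ s}) = ⟨u.1, h2⟩ := hinj htu
          exact Subtype.ext (Subtype.mk_eq_mk.mp h3)
        · have h3 := (m ⟨t.1, h1⟩).2
          rw [htu] at h3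
          exact absurd h3 (Finset.notMem_erase a' C')
        · have h3 := (m ⟨u.1, h2⟩).2
          rw [← htu] at h3
          exact absurd h3 (Finset.notMem_erase a' C')
        · exact Subtype.ext ((ht.resolve_right h1).trans (hu.resolve_right h2).symm)
      · intro t
        by_cases h : t.1 ∈ s
        · simpa [h] using hG ⟨t.1, h⟩
        · have ht := t.2
          rw [Finset.mem_insert] at ht
          simp only [dif_neg h]
          rw [ha'G, ht.resolve_right h]

private theorem le_of_contain {α β : Type*} (G : α → β) (C C' : Finset α)
    (h : FrameContain G C C') : Multiset.map G C.val ≤ Multiset.map G C'.val := by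
  obtain ⟨m, hinj, hG⟩ := h
  have h1 : (C.attach.val.map fun t => (m t).1) ≤ C'.val := by
    rw [Multiset.le_iff_subset (Multiset.Nodup.map
      (fun t u h => hinj (Subtype.ext h)) C.attach.nodup)]
    intro x hx
    obtain ⟨t, _, ht⟩ := Multiset.mem_map.mp hx
    exact ht ▸ (m t).2
  have h2 := Multiset.map_le_map (f := G) h1
  rw [Multiset.map_map] at h2
  have h3 : (C.attach.val.map fun t => G (m t).1) = Multiset.map G C.val := by
    rw [Multiset.map_congr rfl (fun t _ => hG t)]
    have : C.attach.val.map (fun t : {x // x ∈ C} => G t.1)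
        = (C.attach.val.map Subtype.val).map G := by rw [Multiset.map_map]; rfl
    rw [this]
    congr 1
    exact Multiset.attach_map_val C.val
  exact h3 ▸ h2

/-- Partial Order on Class Frames: class frame containment descends to a
well-defined partial order on the quotient by equality of multiset images under `G`. -/
theorem frameContain_partialOrder_on_quotient {α β : Type*} (G : α → β) :
    ∃ le : Quotient (frameSetoid G) → Quotient (frameSetoid G) → Prop,
      (∀ C C' : Finset α, le (Quotient.mk (frameSetoid G) C) (Quotient.mk (frameSetoid G) C') ↔
        FrameContain G C C') ∧
      (∀ x, le x x) ∧
      (∀ x y z, le x y → le y z → le x z) ∧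
      (∀ x y, le x y → le y x → x = y) := by
  refine ⟨Quotient.lift₂ (fun C C' => Multiset.map G C.val ≤ Multiset.map G C'.val)
    (fun a b a' b' ha hb => by
      simp only [eq_iff_iff]
      show Multiset.map G a.val ≤ _ ↔ _
      rw [show Multiset.map G a.val = Multiset.map G a'.val from ha,
        show Multiset.map G b.val = Multiset.map G b'.val from hb]), ?_, ?_, ?_, ?_⟩
  · intro C C'
    exact ⟨contain_of_le G C C', le_of_contain G C C'⟩
  · intro x
    induction x using Quotient.ind
    exact le_refl _
  · intro x y z
    induction x using Quotient.ind
    induction y using Quotient.ind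
    induction z using Quotient.ind
    exact le_trans
  · intro x y
    induction x using Quotient.ind
    induction y using Quotient.ind
    intro h1 h2
    exact Quotient.sound (le_antisymm h1 h2)
end

section
/- Class frame containment is well defined on syntactic regularities: if finite sets C and D of α have equal multiset images under G (Multiset.map G of C equals Multiset.map G of D), and C ≲_G C', then D ≲_G C'; symmetrically, if C' and D' have equal multiset images under G and C ≲_G C', then C ≲_G D'. -/
open Function in
theorem Finite.exists_embedding_comp_eq_iff_card_fiber_le {ι κ β : Type*} [Finite ι]
    [Finite κ] (g : ι → β) (g' : κ → β) :
    (∃ e : ι ↪ κ, ∀ i, g' (e i) = g i) ↔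
      ∀ b, Nat.card {i // g i = b} ≤ Nat.card {k // g' k = b} := by
  constructor
  · rintro ⟨e, he⟩ b
    exact Nat.card_le_card_of_injective (fun i => ⟨e i, (he i).trans i.2⟩)
      fun i j hij => Subtype.ext (e.injective (congrArg Subtype.val hij))
  · intro h
    have fiberEmb b : {i // g i = b} ↪ {k // g' k = b} := by
      have := Fintype.ofFinite {i // g i = b}
      have := Fintype.ofFinite {k // g' k = b}
      have hb := h b
      rw [Nat.card_eq_fintype_card, Nat.card_eq_fintype_card] at hb
      exact (Embedding.nonempty_of_card_le hb).some
    exact ⟨(Equiv.sigmaFiberEquiv g).symm.toEmbedding.trans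
      ((Embedding.sigmaMap (Embedding.refl β) fiberEmb).trans
        (Equiv.sigmaFiberEquiv g').toEmbedding), fun i => (fiberEmb (g i) ⟨i, rfl⟩).2⟩

theorem Finset.card_fiber_eq_count_map {α β : Type*} [DecidableEq β] (G : α → β)
    (C : Finset α) (b : β) : Nat.card {t : C // G t = b} = (C.val.map G).count b := by
  rw [Nat.card_eq_fintype_card, Fintype.card_subtype, Finset.card_def, Finset.filter_val,
    ← Multiset.attach_map_val' C.val G, Multiset.count_map]
  simp_rw [eq_comm]
  rfl

theorem frameContain_iff_map_le {α β : Type*} (G : α → β) (C C' : Finset α) :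
    FrameContain G C C' ↔ C.val.map G ≤ C'.val.map G := by
  classical
  calc FrameContain G C C' ↔ ∃ e : C ↪ C', ∀ t, G (e t) = G t :=
        ⟨fun ⟨m, hm, hG⟩ => ⟨⟨m, hm⟩, hG⟩,
          fun ⟨e, hG⟩ => ⟨e, e.injective, hG⟩⟩
    _ ↔ ∀ b, Nat.card {t : C // G t = b} ≤ Nat.card {t : C' // G t = b} :=
        Finite.exists_embedding_comp_eq_iff_card_fiber_le (fun t : C => G t) (fun t : C' => G t)
    _ ↔ C.val.map G ≤ C'.val.map G := by
        simp_rw [Finset.card_fiber_eq_count_map, Multiset.le_iff_count]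

/-- Class frame containment is well defined on syntactic regularities: it is invariant
under replacing either side by a class frame with the same multiset image under `G`. -/
theorem frameContain_well_defined {α β : Type*} (G : α → β) :
    (∀ C D C' : Finset α, Multiset.map G C.val = Multiset.map G D.val →
      FrameContain G C C' → FrameContain G D C') ∧
    (∀ C C' D' : Finset α, Multiset.map G C'.val = Multiset.map G D'.val →
      FrameContain G C C' → FrameContain G C D') := by
  simp_rw [frameContain_iff_map_le]
  exact ⟨fun C D C' hCD h => hCD ▸ h, fun C C' D' hCD h => hCD ▸ h⟩
end
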